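/- Let Q(x,y)=ax²+hxy+by² be an indefinite integer binary quadratic form whose discriminant D=h²−4ab is positive and not a perfect square, let α ∈ (0,∞) be an irrational root of Q(α,1)=0, and let w_α be its associated word. Then the path w_α eventually runs along the Conway river of Q: there exists N such that for all n ≥ N, Q(pₙ,rₙ)·Q(qₙ,sₙ) < 0, i.e. the two regions adjacent to the n-th edge of the path carry values of Q of opposite signs. -/

import Mathlib

open Filter Matrix

noncomputable section

def Lm : Matrix (Fin 2) (Fin 2) ℤ := !![1, 1; 0, 1]

def Rm : Matrix (Fin 2) (Fin 2) ℤ := !![1, 0; 1, 1]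

/-- `pathMat w n = w 0 * w 1 * ⋯ * w (n-1)`. -/
def pathMat (w : ℕ → Matrix (Fin 2) (Fin 2) ℤ) (n : ℕ) : Matrix (Fin 2) (Fin 2) ℤ :=
  ((List.range n).map w).prod

/-- The value of the form `a x² + h x y + b y²`. -/
def Qval (a h b x y : ℤ) : ℤ := a * x ^ 2 + h * x * y + b * y ^ 2

/-- `|Qₙ(w)| = max(|aₙ|, |bₙ|, |cₙ|)` where the values are taken at the n-th superbase. -/
def Qnorm (a h b : ℤ) (w : ℕ → Matrix (Fin 2) (Fin 2) ℤ) (n : ℕ) : ℤ :=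
  max |Qval a h b (pathMat w n 0 0) (pathMat w n 1 0)|
    (max |Qval a h b (pathMat w n 0 1) (pathMat w n 1 1)|
      |Qval a h b (pathMat w n 0 0 + pathMat w n 0 1) (pathMat w n 1 0 + pathMat w n 1 1)|)

/-- The Lyapunov exponent `Λ_Q(w)` of the values of `Q` along the path `w`. -/
def LyapQ (a h b : ℤ) (w : ℕ → Matrix (Fin 2) (Fin 2) ℤ) : ℝ :=
  limsup (fun n : ℕ => Real.log (Qnorm a h b w n : ℝ) / (n : ℝ)) atTop

/-- The matrix Lyapunov exponent `Λ(w)`, via the spectral radius over ℂ. -/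
def Lyap (w : ℕ → Matrix (Fin 2) (Fin 2) ℤ) : ℝ :=
  limsup (fun n : ℕ =>
    Real.log ((spectralRadius ℂ ((pathMat w n).map ((↑) : ℤ → ℂ))).toReal) / (n : ℝ)) atTop

/-- The Gauss map iterates of `α`. -/
def cfXi (α : ℝ) : ℕ → ℝ
  | 0 => α
  | n + 1 => 1 / Int.fract (cfXi α n)

/-- The `n`-th partial quotient of `α`. -/
def cfA (α : ℝ) (n : ℕ) : ℤ := ⌊cfXi α n⌋

/-- The word consisting of `c 0` copies of `L`, then `c 1` copies of `R`, then `c 2`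
copies of `L`, and so on. -/
def wordOf (c : ℕ → ℕ) (n : ℕ) : Matrix (Fin 2) (Fin 2) ℤ :=
  if Nat.findGreatest (fun k => ∑ i ∈ Finset.range k, c i ≤ n) (n + 1) % 2 = 0 then Lm else Rm

/-- The word `w_α` associated to the continued fraction expansion of `α`. -/
def wordOfCF (α : ℝ) : ℕ → Matrix (Fin 2) (Fin 2) ℤ :=
  wordOf (fun n => (cfA α n).toNat)

/-! Over the reals `Q(x, y) = a (x - α y) (x - β y)` with `β ≠ α` the conjugate root. The word
`w_α` is the Stern–Brocot descent towards `α`: `α` stays strictly inside the Farey interval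
`(qₙ / sₙ, pₙ / rₙ)` of the n-th edge, so `pₙ - α rₙ > 0 > qₙ - α sₙ`. Since `pₙ sₙ - qₙ rₙ = 1`
this interval has length `1 / (rₙ sₙ) → 0`, so eventually `β` lies outside it; then `x - β y`
has the same sign at both columns and the two values of `Q` have opposite signs. -/

lemma det_Lm : Lm.det = 1 := by simp [Lm, det_fin_two]

lemma det_Rm : Rm.det = 1 := by simp [Rm, det_fin_two]

section Entries

variable (A : Matrix (Fin 2) (Fin 2) ℤ) (i : Fin 2)

@[simp] lemma mul_Lm_apply_zero : (A * Lm) i 0 = A i 0 := by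
  simp [Lm, mul_apply, Fin.sum_univ_two]

@[simp] lemma mul_Lm_apply_one : (A * Lm) i 1 = A i 0 + A i 1 := by
  simp [Lm, mul_apply, Fin.sum_univ_two]

@[simp] lemma mul_Rm_apply_zero : (A * Rm) i 0 = A i 0 + A i 1 := by
  simp [Rm, mul_apply, Fin.sum_univ_two]

@[simp] lemma mul_Rm_apply_one : (A * Rm) i 1 = A i 1 := by
  simp [Rm, mul_apply, Fin.sum_univ_two]

end Entries

section Words

variable {w : ℕ → Matrix (Fin 2) (Fin 2) ℤ}

@[simp] lemma pathMat_zero (w : ℕ → Matrix (Fin 2) (Fin 2) ℤ) : pathMat w 0 = 1 := rfl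

lemma pathMat_succ (w : ℕ → Matrix (Fin 2) (Fin 2) ℤ) (n : ℕ) :
    pathMat w (n + 1) = pathMat w n * w n := by
  simp [pathMat, List.range_succ]

lemma det_pathMat (hw : ∀ n, w n = Lm ∨ w n = Rm) (n : ℕ) : (pathMat w n).det = 1 := by
  induction n with
  | zero => simp
  | succ n ih =>
    rcases hw n with hn | hn <;> simp [pathMat_succ, hn, ih, det_Lm, det_Rm]

lemma bottom_row_pathMat (hw : ∀ n, w n = Lm ∨ w n = Rm) (n : ℕ) :
    0 ≤ pathMat w n 1 0 ∧ 1 ≤ pathMat w n 1 1 := by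
  induction n with
  | zero => simp
  | succ n ih =>
    rcases hw n with hn | hn <;> simp only [pathMat_succ, hn, mul_Lm_apply_zero,
      mul_Lm_apply_one, mul_Rm_apply_zero, mul_Rm_apply_one] <;> omega

/-- After an `R` at step `m`, each further letter increases `r + s` by at least one. -/
lemma bottom_row_pathMat_of_Rm (hw : ∀ n, w n = Lm ∨ w n = Rm) {m : ℕ} (hm : w m = Rm)
    {n : ℕ} (hmn : m < n) :
    1 ≤ pathMat w n 1 0 ∧ (n - m : ℤ) ≤ pathMat w n 1 0 + pathMat w n 1 1 := by
  induction n, hmn using Nat.le_induction with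
  | base =>
    have := bottom_row_pathMat hw m
    simp only [pathMat_succ, hm, mul_Rm_apply_zero, mul_Rm_apply_one]
    push_cast
    omega
  | succ n hmn ih =>
    have := bottom_row_pathMat hw n
    rcases hw n with hn | hn <;> simp only [pathMat_succ, hn, mul_Lm_apply_zero,
      mul_Lm_apply_one, mul_Rm_apply_zero, mul_Rm_apply_one] <;> push_cast <;> omega

lemma eventually_lt_bottom_row_mul (hw : ∀ n, w n = Lm ∨ w n = Rm) {m : ℕ} (hm : w m = Rm)
    (C : ℝ) : ∀ᶠ n in atTop, C < (pathMat w n 1 0 : ℝ) * pathMat w n 1 1 := by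
  filter_upwards [eventually_ge_atTop (m + 2 + ⌈C⌉₊)] with n hn
  obtain ⟨hr, hrs⟩ := bottom_row_pathMat_of_Rm hw hm (by omega : m < n)
  have hs := (bottom_row_pathMat hw n).2
  have hlt : (⌈C⌉₊ : ℤ) < pathMat w n 1 0 * pathMat w n 1 1 := by
    nlinarith
  calc C ≤ ⌈C⌉₊ := Nat.le_ceil C
    _ < _ := by exact_mod_cast hlt

end Words

/-- Under the Möbius action, `L⁻¹ • x = x - 1` and `R⁻¹ • x = x / (1 - x)`, so
`σ n = (w 0 ⋯ w (n-1))⁻¹ • σ 0`. -/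
def IsSternBrocotDescent (w : ℕ → Matrix (Fin 2) (Fin 2) ℤ) (σ : ℕ → ℝ) : Prop :=
  ∀ n, (w n = Lm ∧ σ (n + 1) = σ n - 1) ∨ (w n = Rm ∧ σ n < 1 ∧ σ (n + 1) = σ n / (1 - σ n))

namespace IsSternBrocotDescent

variable {w : ℕ → Matrix (Fin 2) (Fin 2) ℤ} {σ : ℕ → ℝ}

lemma letter (h : IsSternBrocotDescent w σ) (n : ℕ) : w n = Lm ∨ w n = Rm :=
  (h n).imp And.left And.left

/-- With `(p q; r s)` the path matrix, `σ 0 = (p σₙ + q) / (r σₙ + s)`. -/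
lemma sub_mul_eq (h : IsSternBrocotDescent w σ) (n : ℕ) :
    0 < pathMat w n 0 0 - σ 0 * pathMat w n 1 0 ∧
      pathMat w n 0 1 - σ 0 * pathMat w n 1 1 =
        -σ n * (pathMat w n 0 0 - σ 0 * pathMat w n 1 0) := by
  induction n with
  | zero => simp
  | succ n ih =>
    obtain ⟨hf, hg⟩ := ih
    rcases h n with ⟨hn, hσ⟩ | ⟨hn, hσ1, hσ⟩
    · simp only [pathMat_succ, hn, mul_Lm_apply_zero, mul_Lm_apply_one, Int.cast_add, hσ]
      exact ⟨hf, by linear_combination hg⟩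
    · simp only [pathMat_succ, hn, mul_Rm_apply_zero, mul_Rm_apply_one, Int.cast_add, hσ]
      have hne : 1 - σ n ≠ 0 := by linarith
      refine ⟨by nlinarith, ?_⟩
      field_simp
      linear_combination hg

lemma sub_mul_signs (h : IsSternBrocotDescent w σ) (hσ : ∀ n, 0 < σ n) (n : ℕ) :
    0 < pathMat w n 0 0 - σ 0 * pathMat w n 1 0 ∧
      pathMat w n 0 1 - σ 0 * pathMat w n 1 1 < 0 := by
  obtain ⟨hf, hg⟩ := h.sub_mul_eq n
  exact ⟨hf, hg ▸ mul_neg_of_neg_of_pos (neg_lt_zero.mpr (hσ n)) hf⟩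

end IsSternBrocotDescent

section Blocks

def blockStart (c : ℕ → ℕ) (k : ℕ) : ℕ := ∑ i ∈ Finset.range k, c i

def blockIndex (c : ℕ → ℕ) (n : ℕ) : ℕ :=
  Nat.findGreatest (fun k => blockStart c k ≤ n) (n + 1)

def blockPos (c : ℕ → ℕ) (n : ℕ) : ℕ := n - blockStart c (blockIndex c n)

variable {c : ℕ → ℕ}

lemma blockStart_succ (c : ℕ → ℕ) (k : ℕ) : blockStart c (k + 1) = blockStart c k + c k :=
  Finset.sum_range_succ _ _

lemma le_blockStart_succ (hc : ∀ k, 0 < c (k + 1)) (k : ℕ) : k ≤ blockStart c (k + 1) := by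
  induction k with
  | zero => exact Nat.zero_le _
  | succ k ih => rw [blockStart_succ]; have := hc k; omega

lemma blockIndex_eq (hc : ∀ k, 0 < c (k + 1)) {m n : ℕ} (h₁ : blockStart c m ≤ n)
    (h₂ : n < blockStart c (m + 1)) : blockIndex c n = m := by
  have hm : m ≤ n + 1 := by
    cases m with
    | zero => omega
    | succ k => have := le_blockStart_succ hc k; omega
  refine le_antisymm ?_ (Nat.le_findGreatest hm h₁)
  by_contra! hlt
  have hspec : blockStart c (blockIndex c n) ≤ n :=
    Nat.findGreatest_spec (P := fun k => blockStart c k ≤ n) (Nat.zero_le _)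
      (by simp [blockStart])
  have hmono : blockStart c (m + 1) ≤ blockStart c (blockIndex c n) :=
    Finset.sum_le_sum_of_subset (Finset.range_subset_range.mpr hlt)
  omega

lemma blockStart_blockIndex (hc : ∀ k, 0 < c (k + 1)) (n : ℕ) :
    blockStart c (blockIndex c n) ≤ n ∧ n < blockStart c (blockIndex c n + 1) := by
  have hex : ∃ k, n < blockStart c (k + 1) := ⟨n + 1, le_blockStart_succ hc (n + 1)⟩
  set m := Nat.find hex
  have h₁ : blockStart c m ≤ n := by
    rcases hm : m with _ | j
    · simp [blockStart]
    · exact not_lt.mp (Nat.find_min hex (show j < m by omega))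
  rw [blockIndex_eq hc h₁ (Nat.find_spec hex)]
  exact ⟨h₁, Nat.find_spec hex⟩

lemma blockPos_lt (hc : ∀ k, 0 < c (k + 1)) (n : ℕ) : blockPos c n < c (blockIndex c n) := by
  have := blockStart_blockIndex hc n
  rw [blockStart_succ] at this
  unfold blockPos
  omega

lemma blockIndex_succ (hc : ∀ k, 0 < c (k + 1)) (n : ℕ) :
    (blockIndex c (n + 1) = blockIndex c n ∧ blockPos c (n + 1) = blockPos c n + 1) ∨
      (blockIndex c (n + 1) = blockIndex c n + 1 ∧ blockPos c (n + 1) = 0 ∧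
        blockPos c n + 1 = c (blockIndex c n)) := by
  obtain ⟨h₁, h₂⟩ := blockStart_blockIndex hc n
  have hS := blockStart_succ c (blockIndex c n)
  rcases (Nat.succ_le_of_lt h₂).lt_or_eq with hlt | heq
  · have hb := blockIndex_eq hc (by omega) hlt
    left
    unfold blockPos
    rw [hb]
    omega
  · have hb := blockIndex_eq hc heq.symm.le
      (by rw [blockStart_succ]; have := hc (blockIndex c n); omega)
    right
    unfold blockPos
    rw [hb]
    omega

end Blocks

section ContinuedFraction

variable {α : ℝ}

def cfDigit (α : ℝ) (n : ℕ) : ℕ := (cfA α n).toNat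

lemma wordOfCF_eq_ite (α : ℝ) (n : ℕ) :
    wordOfCF α n = if blockIndex (cfDigit α) n % 2 = 0 then Lm else Rm := rfl

lemma irrational_cfXi (hirr : Irrational α) : ∀ n, Irrational (cfXi α n)
  | 0 => hirr
  | n + 1 => by
    have hfract : Irrational (Int.fract (cfXi α n)) := (irrational_cfXi hirr n).sub_intCast _
    simpa [cfXi, one_div] using hfract.inv

lemma fract_cfXi_pos (hirr : Irrational α) (n : ℕ) : 0 < Int.fract (cfXi α n) :=
  Int.fract_pos.mpr ((irrational_cfXi hirr n).ne_int _)

lemma one_lt_cfXi_succ (hirr : Irrational α) (n : ℕ) : 1 < cfXi α (n + 1) :=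
  (one_lt_div (fract_cfXi_pos hirr n)).mpr (Int.fract_lt_one _)

lemma cfXi_pos (hpos : 0 < α) (hirr : Irrational α) : ∀ n, 0 < cfXi α n
  | 0 => hpos
  | n + 1 => one_pos.trans (one_lt_cfXi_succ hirr n)

lemma cfDigit_cast (hpos : 0 < α) (hirr : Irrational α) (n : ℕ) :
    (cfDigit α n : ℝ) = ⌊cfXi α n⌋ := by
  rw [cfDigit, cfA, ← Int.cast_natCast, Int.toNat_of_nonneg (Int.floor_nonneg.mpr
    (cfXi_pos hpos hirr n).le)]

lemma cfDigit_succ_pos (hirr : Irrational α) (n : ℕ) : 0 < cfDigit α (n + 1) := by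
  have : (1 : ℤ) ≤ cfA α (n + 1) :=
    Int.le_floor.mpr (by exact_mod_cast (one_lt_cfXi_succ hirr n).le)
  unfold cfDigit
  omega

lemma cfXi_succ (hpos : 0 < α) (hirr : Irrational α) (n : ℕ) :
    cfXi α (n + 1) = (cfXi α n - cfDigit α n)⁻¹ := by
  rw [cfDigit_cast hpos hirr, cfXi, one_div, Int.fract]

lemma cfDigit_lt_cfXi (hpos : 0 < α) (hirr : Irrational α) (n : ℕ) :
    (cfDigit α n : ℝ) < cfXi α n := by
  rw [cfDigit_cast hpos hirr]
  exact sub_pos.mp (fract_cfXi_pos hirr n)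

/-- The remaining length `cfXi α k - j` of block `k` after its first `j` letters. -/
def cfTail (α : ℝ) (n : ℕ) : ℝ :=
  cfXi α (blockIndex (cfDigit α) n) - blockPos (cfDigit α) n

/-- The point `(w_α 0 ⋯ w_α (n-1))⁻¹ • α`: in an `R`-block it is the reciprocal of the tail. -/
def cfSlope (α : ℝ) (n : ℕ) : ℝ :=
  if blockIndex (cfDigit α) n % 2 = 0 then cfTail α n else (cfTail α n)⁻¹

lemma one_lt_cfTail (hpos : 0 < α) (hirr : Irrational α) (n : ℕ) : 1 < cfTail α n := by
  have hlt : (blockPos (cfDigit α) n + 1 : ℝ) ≤ cfDigit α (blockIndex (cfDigit α) n) := by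
    exact_mod_cast blockPos_lt (cfDigit_succ_pos hirr) n
  have := cfDigit_lt_cfXi hpos hirr (blockIndex (cfDigit α) n)
  unfold cfTail
  linarith

lemma cfSlope_pos (hpos : 0 < α) (hirr : Irrational α) (n : ℕ) : 0 < cfSlope α n := by
  have := one_lt_cfTail hpos hirr n
  unfold cfSlope
  split <;> positivity

lemma cfSlope_succ (hpos : 0 < α) (hirr : Irrational α) (n : ℕ) :
    cfSlope α (n + 1) =
      if blockIndex (cfDigit α) n % 2 = 0 then cfTail α n - 1 else (cfTail α n - 1)⁻¹ := by
  rcases blockIndex_succ (cfDigit_succ_pos hirr) n with ⟨hb, hp⟩ | ⟨hb, hp, hlast⟩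
  · have htail : cfTail α (n + 1) = cfTail α n - 1 := by
      simp only [cfTail, hb, hp]
      push_cast
      ring
    simp only [cfSlope, hb, htail]
  · have htail : cfTail α (n + 1) = (cfTail α n - 1)⁻¹ := by
      have hlast' : (blockPos (cfDigit α) n : ℝ) + 1 = cfDigit α (blockIndex (cfDigit α) n) :=
        mod_cast hlast
      simp only [cfTail, hb, hp, cfXi_succ hpos hirr, ← hlast', CharP.cast_eq_zero, sub_zero]
      ring
    simp only [cfSlope, hb, htail, inv_inv]
    split_ifs <;> first | rfl | omega

lemma cfSlope_zero (hpos : 0 < α) (hirr : Irrational α) : cfSlope α 0 = α := by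
  have hc := cfDigit_succ_pos hirr
  rcases Nat.eq_zero_or_pos (cfDigit α 0) with h0 | h0
  · have hb : blockIndex (cfDigit α) 0 = 1 :=
      blockIndex_eq hc (by simp [blockStart, h0])
        (by simp [blockStart, Finset.sum_range_succ, h0, hc 0])
    simp [cfSlope, cfTail, hb, blockPos, cfXi_succ hpos hirr, h0, cfXi]
  · have hb : blockIndex (cfDigit α) 0 = 0 :=
      blockIndex_eq hc (by simp [blockStart]) (by simp [blockStart, h0])
    simp [cfSlope, cfTail, hb, blockPos, blockStart, cfXi]

lemma isSternBrocotDescent_cfSlope (hpos : 0 < α) (hirr : Irrational α) :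
    IsSternBrocotDescent (wordOfCF α) (cfSlope α) := by
  intro n
  have ht := one_lt_cfTail hpos hirr n
  rw [wordOfCF_eq_ite, cfSlope_succ hpos hirr, cfSlope]
  split_ifs with hb
  · exact Or.inl ⟨rfl, rfl⟩
  · refine Or.inr ⟨rfl, inv_lt_one_of_one_lt₀ ht, ?_⟩
    have : cfTail α n - 1 ≠ 0 := by linarith
    field_simp

lemma wordOfCF_cfDigit_zero (hirr : Irrational α) : wordOfCF α (cfDigit α 0) = Rm := by
  have hc := cfDigit_succ_pos hirr
  have hb : blockIndex (cfDigit α) (cfDigit α 0) = 1 :=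
    blockIndex_eq hc (by simp [blockStart]) (by simp [blockStart, Finset.sum_range_succ, hc 0])
  simp [wordOfCF_eq_ite, hb]

end ContinuedFraction

section QuadraticForm

variable {a h b : ℤ} {α : ℝ}

lemma ne_zero_of_irrational_root (hD : 0 < h ^ 2 - 4 * a * b) (hirr : Irrational α)
    (hroot : (a : ℝ) * α ^ 2 + (h : ℝ) * α + (b : ℝ) = 0) : a ≠ 0 := by
  rintro rfl
  rcases eq_or_ne h 0 with rfl | hh
  · have hb : b = 0 := by exact_mod_cast (by simpa using hroot : (b : ℝ) = 0)
    simp [hb] at hD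
  · refine hirr ⟨-b / h, ?_⟩
    have hh' : (h : ℝ) ≠ 0 := by exact_mod_cast hh
    push_cast at hroot ⊢
    field_simp
    linarith

lemma exists_qval_eq_mul (ha : a ≠ 0) (hirr : Irrational α)
    (hroot : (a : ℝ) * α ^ 2 + (h : ℝ) * α + (b : ℝ) = 0) :
    ∃ β : ℝ, β ≠ α ∧ ∀ x y : ℤ, (Qval a h b x y : ℝ) = a * ((x - α * y) * (x - β * y)) := by
  have ha' : (a : ℝ) ≠ 0 := by exact_mod_cast ha
  refine ⟨-h / a - α, fun hβ => hirr ⟨-h / (2 * a), ?_⟩, fun x y => ?_⟩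
  · push_cast
    field_simp at hβ ⊢
    linarith
  · simp only [Qval]
    push_cast
    field_simp
    linear_combination (y : ℝ) ^ 2 * hroot

end QuadraticForm

/-- `α` lies in the interval between `q / s` and `p / r`, of length `1 / (r s)`; a point farther
than that from `α` lies on the same side of both endpoints. -/
lemma sub_mul_mul_sub_mul_pos {α β p q r s : ℝ} (hf : 0 < p - α * r) (hg : q - α * s < 0)
    (hdet : p * s - q * r = 1) (hr : 0 < r) (hs : 0 < s) (hfar : 1 < |α - β| * (r * s)) :
    0 < (p - β * r) * (q - β * s) := by
  rcases lt_or_ge α β with hαβ | hβα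
  · rw [abs_of_neg (sub_neg.mpr hαβ)] at hfar
    have hp : p - β * r < 0 := by nlinarith
    have hq : q - β * s < 0 := by nlinarith
    exact mul_pos_of_neg_of_neg hp hq
  · rw [abs_of_nonneg (sub_nonneg.mpr hβα)] at hfar
    have hp : 0 < p - β * r := by nlinarith
    have hq : 0 < q - β * s := by nlinarith
    exact mul_pos hp hq

theorem path_reaches_conway_river_general (a h b : ℤ)
    (hD : 0 < h ^ 2 - 4 * a * b)
    (α : ℝ) (hpos : 0 < α) (hirr : Irrational α)
    (hroot : (a : ℝ) * α ^ 2 + (h : ℝ) * α + (b : ℝ) = 0) :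
    ∃ N : ℕ, ∀ n ≥ N,
      Qval a h b (pathMat (wordOfCF α) n 0 0) (pathMat (wordOfCF α) n 1 0) *
        Qval a h b (pathMat (wordOfCF α) n 0 1) (pathMat (wordOfCF α) n 1 1) < 0 := by
  have ha := ne_zero_of_irrational_root hD hirr hroot
  obtain ⟨β, hβα, hQ⟩ := exists_qval_eq_mul ha hirr hroot
  have hdesc := isSternBrocotDescent_cfSlope hpos hirr
  have hR := wordOfCF_cfDigit_zero hirr
  have hsep : 0 < |α - β| := abs_pos.mpr (sub_ne_zero.mpr hβα.symm)
  refine eventually_atTop.mp ?_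
  filter_upwards [eventually_lt_bottom_row_mul hdesc.letter hR (1 / |α - β|),
    eventually_gt_atTop (cfDigit α 0)] with n hfar hn
  set P := pathMat (wordOfCF α) n
  obtain ⟨hf, hg⟩ := hdesc.sub_mul_signs (cfSlope_pos hpos hirr) n
  rw [cfSlope_zero hpos hirr] at hf hg
  have hr : (1 : ℝ) ≤ P 1 0 := by exact_mod_cast (bottom_row_pathMat_of_Rm hdesc.letter hR hn).1
  have hs : (1 : ℝ) ≤ P 1 1 := by exact_mod_cast (bottom_row_pathMat hdesc.letter n).2
  have hdet : (P 0 0 * P 1 1 - P 0 1 * P 1 0 : ℝ) = 1 := by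
    exact_mod_cast (det_fin_two P).symm.trans (det_pathMat hdesc.letter n)
  have hβ := sub_mul_mul_sub_mul_pos hf hg hdet (by linarith) (by linarith)
    ((div_lt_iff₀' hsep).mp hfar)
  have ha2 : (0 : ℝ) < (a : ℝ) ^ 2 := by positivity
  have hreal : (Qval a h b (P 0 0) (P 1 0) * Qval a h b (P 0 1) (P 1 1) : ℝ) < 0 := by
    rw [hQ, hQ]
    nlinarith [mul_neg_of_pos_of_neg hf hg, mul_pos ha2 hβ]
  exact_mod_cast hreal

/-- For an indefinite integer binary quadratic form `Q` whose discriminant is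
positive and not a perfect square, and an irrational root `α ∈ (0,∞)` of `Q(α,1)=0`, the path
`w_α` eventually runs along the Conway river of `Q`: eventually the two regions adjacent to
the n-th edge carry values of `Q` of opposite signs. -/
theorem path_reaches_conway_river (a h b : ℤ)
    (hD : 0 < h ^ 2 - 4 * a * b) (hns : ¬ IsSquare (h ^ 2 - 4 * a * b))
    (α : ℝ) (hpos : 0 < α) (hirr : Irrational α)
    (hroot : (a : ℝ) * α ^ 2 + (h : ℝ) * α + (b : ℝ) = 0) :
    ∃ N : ℕ, ∀ n ≥ N,
      Qval a h b (pathMat (wordOfCF α) n 0 0) (pathMat (wordOfCF α) n 1 0) *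
        Qval a h b (pathMat (wordOfCF α) n 0 1) (pathMat (wordOfCF α) n 1 1) < 0 :=
  path_reaches_conway_river_general a h b hD α hpos hirr hroot

end
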